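/- The vector field u(r,θ) = (Φ/(2πr)) e_r + (μ/r) e_θ in polar coordinates on ℝ²∖{0}, together with the pressure p(r,θ) = -(Φ²/(8π²) + μ²/2)/r², satisfies the stationary incompressible Navier-Stokes equations Δu - ∇p = u·∇u, ∇·u = 0. -/

import Mathlib

open Real

noncomputable section

/-- First partial derivative of a scalar function on ℝ². -/
def pd1 (f : ℝ × ℝ → ℝ) (x : ℝ × ℝ) : ℝ := fderiv ℝ f x (1, 0)

/-- Second partial derivative of a scalar function on ℝ². -/
def pd2 (f : ℝ × ℝ → ℝ) (x : ℝ × ℝ) : ℝ := fderiv ℝ f x (0, 1)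

/-- Laplacian of a scalar function on ℝ². -/
def lap (f : ℝ × ℝ → ℝ) (x : ℝ × ℝ) : ℝ := pd1 (pd1 f) x + pd2 (pd2 f) x

/-- Radial coordinate. -/
def rr (x : ℝ × ℝ) : ℝ := Real.sqrt (x.1 ^ 2 + x.2 ^ 2)

/-- Angular coordinate (argument of x₁ + i x₂). -/
def ang (x : ℝ × ℝ) : ℝ := Complex.arg (x.1 + x.2 * Complex.I)

/-- Radial unit vector e_r = x/|x|. -/
def er (x : ℝ × ℝ) : ℝ × ℝ := (x.1 / rr x, x.2 / rr x)

/-- Tangential unit vector e_θ = (-x₂, x₁)/|x|. -/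
def et (x : ℝ × ℝ) : ℝ × ℝ := (-x.2 / rr x, x.1 / rr x)

/-- The stationary Navier-Stokes equations Δu - ∇p = (u·∇)u, ∇·u = 0 hold at x. -/
def NSat (u : ℝ × ℝ → ℝ × ℝ) (p : ℝ × ℝ → ℝ) (x : ℝ × ℝ) : Prop :=
  lap (fun y => (u y).1) x - pd1 p x
      = (u x).1 * pd1 (fun y => (u y).1) x + (u x).2 * pd2 (fun y => (u y).1) x ∧
  lap (fun y => (u y).2) x - pd2 p x
      = (u x).1 * pd1 (fun y => (u y).2) x + (u x).2 * pd2 (fun y => (u y).2) x ∧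
  pd1 (fun y => (u y).1) x + pd2 (fun y => (u y).2) x = 0

/-- Rotation by angle ψ. -/
def rot (ψ : ℝ) (v : ℝ × ℝ) : ℝ × ℝ :=
  (Real.cos ψ * v.1 - Real.sin ψ * v.2, Real.sin ψ * v.1 + Real.cos ψ * v.2)

/-- Euclidean dot product on ℝ². -/
def dot (v w : ℝ × ℝ) : ℝ := v.1 * w.1 + v.2 * w.2

namespace NSaux

lemma sum_sq_ne {y : ℝ × ℝ} (hy : y ≠ 0) : y.1 ^ 2 + y.2 ^ 2 ≠ 0 := by
  intro h
  have h1 : y.1 = 0 := by nlinarith [sq_nonneg y.1, sq_nonneg y.2]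
  have h2 : y.2 = 0 := by nlinarith [sq_nonneg y.1, sq_nonneg y.2]
  exact hy (Prod.ext h1 h2)

lemma diff_div {f g : ℝ × ℝ → ℝ} {x : ℝ × ℝ} (hf : DifferentiableAt ℝ f x)
    (hg : DifferentiableAt ℝ g x) (h : g x ≠ 0) :
    DifferentiableAt ℝ (fun y => f y / g y) x := by
  have := hf.mul (hg.inv h)
  simpa [div_eq_mul_inv] using hf.fun_mul (hg.fun_inv h)

lemma hd_num (α β γ t : ℝ) :
    HasDerivAt (fun s : ℝ => α * s ^ 2 + β * s + γ) (2 * α * t + β) t := by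
  have h := (((hasDerivAt_pow 2 t).const_mul α).add ((hasDerivAt_id t).const_mul β)).add_const γ
  refine h.congr_deriv ?_
  push_cast
  ring

lemma hd_den (δ t : ℝ) : HasDerivAt (fun s : ℝ => s ^ 2 + δ) (2 * t) t := by
  have h := (hasDerivAt_pow 2 t).add_const δ
  refine h.congr_deriv ?_
  push_cast
  ring

lemma hd1 (α β γ δ t : ℝ) (h : t ^ 2 + δ ≠ 0) :
    HasDerivAt (fun s : ℝ => (α * s ^ 2 + β * s + γ) / (s ^ 2 + δ))
      (((2 * α * t + β) * (t ^ 2 + δ) - (α * t ^ 2 + β * t + γ) * (2 * t)) / (t ^ 2 + δ) ^ 2) t :=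
  (hd_num α β γ t).div (hd_den δ t) h

lemma hd2 (α β γ δ t : ℝ) (h : t ^ 2 + δ ≠ 0) :
    HasDerivAt (fun s : ℝ => (α * s ^ 2 + β * s + γ) / (s ^ 2 + δ) ^ 2)
      (((2 * α * t + β) * (t ^ 2 + δ) ^ 2 - (α * t ^ 2 + β * t + γ) * (2 * (t ^ 2 + δ) * (2 * t)))
        / ((t ^ 2 + δ) ^ 2) ^ 2) t := by
  have hden : HasDerivAt (fun s : ℝ => (s ^ 2 + δ) ^ 2) (2 * (t ^ 2 + δ) * (2 * t)) t := by
    have h2 := (hd_den δ t).pow 2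
    refine h2.congr_deriv ?_
    push_cast
    ring
  exact (hd_num α β γ t).div hden (pow_ne_zero 2 h)

lemma pd1_of {f : ℝ × ℝ → ℝ} {x : ℝ × ℝ} (hf : DifferentiableAt ℝ f x) {d : ℝ}
    (hd : HasDerivAt (fun t => f (t, x.2)) d x.1) : pd1 f x = d := by
  have hl : HasDerivAt (fun t : ℝ => ((t, x.2) : ℝ × ℝ)) ((1 : ℝ), (0 : ℝ)) x.1 :=
    (hasDerivAt_id x.1).prodMk (hasDerivAt_const x.1 x.2)
  have h2 : HasDerivAt (fun t => f (t, x.2)) (fderiv ℝ f x (1, 0)) x.1 :=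
    hf.hasFDerivAt.comp_hasDerivAt x.1 hl
  exact (h2.unique hd)

lemma pd2_of {f : ℝ × ℝ → ℝ} {x : ℝ × ℝ} (hf : DifferentiableAt ℝ f x) {d : ℝ}
    (hd : HasDerivAt (fun t => f (x.1, t)) d x.2) : pd2 f x = d := by
  have hl : HasDerivAt (fun t : ℝ => ((x.1, t) : ℝ × ℝ)) ((0 : ℝ), (1 : ℝ)) x.2 :=
    (hasDerivAt_const x.2 x.1).prodMk (hasDerivAt_id x.2)
  have h2 : HasDerivAt (fun t => f (x.1, t)) (fderiv ℝ f x (0, 1)) x.2 :=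
    hf.hasFDerivAt.comp_hasDerivAt x.2 hl
  exact (h2.unique hd)

/-- velocity component: (a x₁ - b x₂)/|x|². -/
def V (a b : ℝ) (y : ℝ × ℝ) : ℝ := (a * y.1 - b * y.2) / (y.1 ^ 2 + y.2 ^ 2)

/-- ∂₁ V. -/
def G1 (a b : ℝ) (y : ℝ × ℝ) : ℝ :=
  (a * (y.2 ^ 2 - y.1 ^ 2) + 2 * b * y.1 * y.2) / (y.1 ^ 2 + y.2 ^ 2) ^ 2

/-- ∂₂ V. -/
def G2 (a b : ℝ) (y : ℝ × ℝ) : ℝ :=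
  (b * (y.2 ^ 2 - y.1 ^ 2) - 2 * a * y.1 * y.2) / (y.1 ^ 2 + y.2 ^ 2) ^ 2

lemma diffV (a b : ℝ) {y : ℝ × ℝ} (hy : y ≠ 0) : DifferentiableAt ℝ (V a b) y := by
  have hS := sum_sq_ne hy
  unfold V
  have hnum : DifferentiableAt ℝ (fun y : ℝ × ℝ => a * y.1 - b * y.2) y := by fun_prop
  have hden : DifferentiableAt ℝ (fun y : ℝ × ℝ => y.1 ^ 2 + y.2 ^ 2) y := by fun_prop
  exact diff_div hnum hden hS

lemma pdV1 (a b : ℝ) {y : ℝ × ℝ} (hy : y ≠ 0) : pd1 (V a b) y = G1 a b y := by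
  have hS := sum_sq_ne hy
  have hfun : (fun t : ℝ => V a b (t, y.2))
      = fun s : ℝ => (0 * s ^ 2 + a * s + -(b * y.2)) / (s ^ 2 + y.2 ^ 2) := by
    funext t; unfold V; ring_nf
  have hD := hd1 0 a (-(b * y.2)) (y.2 ^ 2) y.1 hS
  rw [← hfun] at hD
  rw [pd1_of (diffV a b hy) hD]
  unfold G1
  field_simp
  ring

lemma pdV2 (a b : ℝ) {y : ℝ × ℝ} (hy : y ≠ 0) : pd2 (V a b) y = G2 a b y := by
  have hS := sum_sq_ne hy
  have hS' : y.2 ^ 2 + y.1 ^ 2 ≠ 0 := by rwa [add_comm]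
  have hfun : (fun t : ℝ => V a b (y.1, t))
      = fun s : ℝ => (0 * s ^ 2 + (-b) * s + a * y.1) / (s ^ 2 + y.1 ^ 2) := by
    funext t; unfold V; ring_nf
  have hD := hd1 0 (-b) (a * y.1) (y.1 ^ 2) y.2 hS'
  rw [← hfun] at hD
  rw [pd2_of (diffV a b hy) hD]
  unfold G2
  field_simp
  ring

lemma lapV (a b : ℝ) {x : ℝ × ℝ} (hx : x ≠ 0) :
    pd1 (G1 a b) x + pd2 (G2 a b) x = 0 := by
  have hS := sum_sq_ne hx
  have hS' : x.2 ^ 2 + x.1 ^ 2 ≠ 0 := by rwa [add_comm]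
  have hden : DifferentiableAt ℝ (fun y : ℝ × ℝ => (y.1 ^ 2 + y.2 ^ 2) ^ 2) x := by fun_prop
  have hden0 : (x.1 ^ 2 + x.2 ^ 2) ^ 2 ≠ 0 := pow_ne_zero 2 hS
  have d1 : DifferentiableAt ℝ (G1 a b) x := by
    unfold G1
    have hnum : DifferentiableAt ℝ
        (fun y : ℝ × ℝ => a * (y.2 ^ 2 - y.1 ^ 2) + 2 * b * y.1 * y.2) x := by fun_prop
    exact diff_div hnum hden hden0
  have d2 : DifferentiableAt ℝ (G2 a b) x := by
    unfold G2
    have hnum : DifferentiableAt ℝ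
        (fun y : ℝ × ℝ => b * (y.2 ^ 2 - y.1 ^ 2) - 2 * a * y.1 * y.2) x := by fun_prop
    exact diff_div hnum hden hden0
  have hfun1 : (fun t : ℝ => G1 a b (t, x.2))
      = fun s : ℝ => ((-a) * s ^ 2 + (2 * b * x.2) * s + a * x.2 ^ 2) / (s ^ 2 + x.2 ^ 2) ^ 2 := by
    funext t; unfold G1; ring_nf
  have hD1 := hd2 (-a) (2 * b * x.2) (a * x.2 ^ 2) (x.2 ^ 2) x.1 hS
  rw [← hfun1] at hD1
  have hfun2 : (fun t : ℝ => G2 a b (x.1, t))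
      = fun s : ℝ => (b * s ^ 2 + (-(2 * a * x.1)) * s + -(b * x.1 ^ 2)) / (s ^ 2 + x.1 ^ 2) ^ 2 := by
    funext t; unfold G2; ring_nf
  have hD2 := hd2 b (-(2 * a * x.1)) (-(b * x.1 ^ 2)) (x.1 ^ 2) x.2 hS'
  rw [← hfun2] at hD2
  rw [pd1_of d1 hD1, pd2_of d2 hD2]
  field_simp
  ring

lemma pdP1 (c : ℝ) {x : ℝ × ℝ} (hx : x ≠ 0) :
    pd1 (fun y : ℝ × ℝ => c / (y.1 ^ 2 + y.2 ^ 2)) x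
      = -(2 * c * x.1) / (x.1 ^ 2 + x.2 ^ 2) ^ 2 := by
  have hS := sum_sq_ne hx
  have d : DifferentiableAt ℝ (fun y : ℝ × ℝ => c / (y.1 ^ 2 + y.2 ^ 2)) x := by
    have hnum : DifferentiableAt ℝ (fun _ : ℝ × ℝ => c) x := by fun_prop
    have hden : DifferentiableAt ℝ (fun y : ℝ × ℝ => y.1 ^ 2 + y.2 ^ 2) x := by fun_prop
    exact diff_div hnum hden hS
  have hfun : (fun t : ℝ => c / (t ^ 2 + x.2 ^ 2))
      = fun s : ℝ => (0 * s ^ 2 + 0 * s + c) / (s ^ 2 + x.2 ^ 2) := by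
    funext t; ring_nf
  have hD := hd1 0 0 c (x.2 ^ 2) x.1 hS
  rw [← hfun] at hD
  rw [pd1_of d hD]
  field_simp
  ring

lemma pdP2 (c : ℝ) {x : ℝ × ℝ} (hx : x ≠ 0) :
    pd2 (fun y : ℝ × ℝ => c / (y.1 ^ 2 + y.2 ^ 2)) x
      = -(2 * c * x.2) / (x.1 ^ 2 + x.2 ^ 2) ^ 2 := by
  have hS := sum_sq_ne hx
  have hS' : x.2 ^ 2 + x.1 ^ 2 ≠ 0 := by rwa [add_comm]
  have d : DifferentiableAt ℝ (fun y : ℝ × ℝ => c / (y.1 ^ 2 + y.2 ^ 2)) x := by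
    have hnum : DifferentiableAt ℝ (fun _ : ℝ × ℝ => c) x := by fun_prop
    have hden : DifferentiableAt ℝ (fun y : ℝ × ℝ => y.1 ^ 2 + y.2 ^ 2) x := by fun_prop
    exact diff_div hnum hden hS
  have hfun : (fun t : ℝ => c / (x.1 ^ 2 + t ^ 2))
      = fun s : ℝ => (0 * s ^ 2 + 0 * s + c) / (s ^ 2 + x.1 ^ 2) := by
    funext t; ring_nf
  have hD := hd1 0 0 c (x.1 ^ 2) x.2 hS'
  rw [← hfun] at hD
  rw [pd2_of d hD]
  field_simp
  ring

lemma pd1_congr {f g : ℝ × ℝ → ℝ} {x : ℝ × ℝ} (hx : x ≠ 0)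
    (h : ∀ y : ℝ × ℝ, y ≠ 0 → f y = g y) : pd1 f x = pd1 g x := by
  have he : f =ᶠ[nhds x] g := by
    filter_upwards [compl_singleton_mem_nhds hx] with y hy
    exact h y hy
  unfold pd1
  rw [he.fderiv_eq]

lemma pd2_congr {f g : ℝ × ℝ → ℝ} {x : ℝ × ℝ} (hx : x ≠ 0)
    (h : ∀ y : ℝ × ℝ, y ≠ 0 → f y = g y) : pd2 f x = pd2 g x := by
  have he : f =ᶠ[nhds x] g := by
    filter_upwards [compl_singleton_mem_nhds hx] with y hy
    exact h y hy
  unfold pd2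
  rw [he.fderiv_eq]

end NSaux

theorem stmt0 (Φ μ : ℝ) :
    ∀ x : ℝ × ℝ, x ≠ 0 →
      NSat (fun y => (Φ / (2 * π * rr y)) • er y + (μ / rr y) • et y)
        (fun y => -(Φ ^ 2 / (8 * π ^ 2) + μ ^ 2 / 2) / (rr y) ^ 2) x := by
  intro x hx
  have hS := NSaux.sum_sq_ne hx
  have hu1 : ∀ y : ℝ × ℝ, y ≠ 0 →
      ((Φ / (2 * π * rr y)) • er y + (μ / rr y) • et y).1 = NSaux.V (Φ / (2 * π)) μ y := by
    intro y hy
    have hSy := NSaux.sum_sq_ne hy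
    have hpos : 0 < y.1 ^ 2 + y.2 ^ 2 := lt_of_le_of_ne (by positivity) (Ne.symm hSy)
    have hr0 : rr y ≠ 0 := by unfold rr; exact ne_of_gt (Real.sqrt_pos.mpr hpos)
    have hr2 : rr y ^ 2 = y.1 ^ 2 + y.2 ^ 2 := by unfold rr; exact Real.sq_sqrt (by positivity)
    unfold NSaux.V er et
    simp only [Prod.fst_add, Prod.smul_fst, smul_eq_mul]
    rw [← hr2]
    field_simp
    ring
  have hu2 : ∀ y : ℝ × ℝ, y ≠ 0 →
      ((Φ / (2 * π * rr y)) • er y + (μ / rr y) • et y).2 = NSaux.V μ (-(Φ / (2 * π))) y := by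
    intro y hy
    have hSy := NSaux.sum_sq_ne hy
    have hpos : 0 < y.1 ^ 2 + y.2 ^ 2 := lt_of_le_of_ne (by positivity) (Ne.symm hSy)
    have hr0 : rr y ≠ 0 := by unfold rr; exact ne_of_gt (Real.sqrt_pos.mpr hpos)
    have hr2 : rr y ^ 2 = y.1 ^ 2 + y.2 ^ 2 := by unfold rr; exact Real.sq_sqrt (by positivity)
    unfold NSaux.V er et
    simp only [Prod.snd_add, Prod.smul_snd, smul_eq_mul]
    rw [← hr2]
    field_simp
    ring
  have h11 : ∀ y : ℝ × ℝ, y ≠ 0 →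
      pd1 (fun y => ((Φ / (2 * π * rr y)) • er y + (μ / rr y) • et y).1) y
        = NSaux.G1 (Φ / (2 * π)) μ y :=
    fun y hy => (NSaux.pd1_congr hy hu1).trans (NSaux.pdV1 (Φ / (2 * π)) μ hy)
  have h21 : ∀ y : ℝ × ℝ, y ≠ 0 →
      pd2 (fun y => ((Φ / (2 * π * rr y)) • er y + (μ / rr y) • et y).1) y
        = NSaux.G2 (Φ / (2 * π)) μ y :=
    fun y hy => (NSaux.pd2_congr hy hu1).trans (NSaux.pdV2 (Φ / (2 * π)) μ hy)
  have h12 : ∀ y : ℝ × ℝ, y ≠ 0 →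
      pd1 (fun y => ((Φ / (2 * π * rr y)) • er y + (μ / rr y) • et y).2) y
        = NSaux.G1 μ (-(Φ / (2 * π))) y :=
    fun y hy => (NSaux.pd1_congr hy hu2).trans (NSaux.pdV1 μ (-(Φ / (2 * π))) hy)
  have h22 : ∀ y : ℝ × ℝ, y ≠ 0 →
      pd2 (fun y => ((Φ / (2 * π * rr y)) • er y + (μ / rr y) • et y).2) y
        = NSaux.G2 μ (-(Φ / (2 * π))) y :=
    fun y hy => (NSaux.pd2_congr hy hu2).trans (NSaux.pdV2 μ (-(Φ / (2 * π))) hy)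
  have H1 : pd1 (pd1 (fun y => ((Φ / (2 * π * rr y)) • er y + (μ / rr y) • et y).1)) x
      = pd1 (NSaux.G1 (Φ / (2 * π)) μ) x := NSaux.pd1_congr hx h11
  have H2 : pd2 (pd2 (fun y => ((Φ / (2 * π * rr y)) • er y + (μ / rr y) • et y).1)) x
      = pd2 (NSaux.G2 (Φ / (2 * π)) μ) x := NSaux.pd2_congr hx h21
  have H3 : pd1 (pd1 (fun y => ((Φ / (2 * π * rr y)) • er y + (μ / rr y) • et y).2)) x
      = pd1 (NSaux.G1 μ (-(Φ / (2 * π)))) x := NSaux.pd1_congr hx h12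
  have H4 : pd2 (pd2 (fun y => ((Φ / (2 * π * rr y)) • er y + (μ / rr y) • et y).2)) x
      = pd2 (NSaux.G2 μ (-(Φ / (2 * π)))) x := NSaux.pd2_congr hx h22
  have hp : (fun y : ℝ × ℝ => -(Φ ^ 2 / (8 * π ^ 2) + μ ^ 2 / 2) / rr y ^ 2)
      = fun y : ℝ × ℝ => -(Φ ^ 2 / (8 * π ^ 2) + μ ^ 2 / 2) / (y.1 ^ 2 + y.2 ^ 2) := by
    funext y
    unfold rr
    rw [Real.sq_sqrt (by positivity)]
  have hP1 : pd1 (fun y : ℝ × ℝ => -(Φ ^ 2 / (8 * π ^ 2) + μ ^ 2 / 2) / rr y ^ 2) x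
      = -(2 * -(Φ ^ 2 / (8 * π ^ 2) + μ ^ 2 / 2) * x.1) / (x.1 ^ 2 + x.2 ^ 2) ^ 2 := by
    rw [hp]; exact NSaux.pdP1 (-(Φ ^ 2 / (8 * π ^ 2) + μ ^ 2 / 2)) hx
  have hP2 : pd2 (fun y : ℝ × ℝ => -(Φ ^ 2 / (8 * π ^ 2) + μ ^ 2 / 2) / rr y ^ 2) x
      = -(2 * -(Φ ^ 2 / (8 * π ^ 2) + μ ^ 2 / 2) * x.2) / (x.1 ^ 2 + x.2 ^ 2) ^ 2 := by
    rw [hp]; exact NSaux.pdP2 (-(Φ ^ 2 / (8 * π ^ 2) + μ ^ 2 / 2)) hx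
  unfold NSat lap
  beta_reduce
  refine ⟨?_, ?_, ?_⟩
  · rw [H1, H2, NSaux.lapV (Φ / (2 * π)) μ hx, hP1, hu1 x hx, hu2 x hx, h11 x hx, h21 x hx]
    unfold NSaux.V NSaux.G1 NSaux.G2
    field_simp
    ring
  · rw [H3, H4, NSaux.lapV μ (-(Φ / (2 * π))) hx, hP2, hu1 x hx, hu2 x hx, h12 x hx, h22 x hx]
    unfold NSaux.V NSaux.G1 NSaux.G2
    field_simp
    ring
  · rw [h11 x hx, h22 x hx]
    unfold NSaux.G1 NSaux.G2
    ring
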